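/- Let V be a finite-dimensional real vector space with a nondegenerate symmetric bilinear form B and quadratic form Q(x) = B(x,x), let Cl(Q) be its Clifford algebra with canonical map ι : V → Cl(Q) (convention ι(x)² = Q(x)·1), and let Σ be a module over Cl(Q) which is a real vector space on which the scalars ℝ ⊆ Cl(Q) act by scalar multiplication. Let ψ ∈ Σ be nonzero and let f : V → V be a B-symmetric endomorphism such that ι(f(X))•ψ = ι(X)•ψ for all X ∈ V. Then Tr(f) = dim V; moreover, setting V_ψ := {X ∈ V : ι(X)•ψ = 0}, the endomorphism f preserves V_ψ and the induced endomorphism of the quotient V/V_ψ is the identity. -/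

import Mathlib

/-!
Put `g = f - id`. The hypothesis says every `g X` lies in the annihilator `V_ψ`, and the
Clifford relation `ι u ι v + ι v ι u = 2 B(u, v)` makes `V_ψ` totally isotropic. Hence
`B(g² x, y) = B(g x, g y) = 0` for all `y`, so `g² = 0` by nondegeneracy, and `tr g = 0`
because `g` is nilpotent; thus `tr f = tr id + tr g = dim V`. Since `f X - X ∈ V_ψ`, the map `f`
preserves `V_ψ` and induces the identity on `V ⧸ V_ψ`.
-/

open CliffordAlgebra

theorem CliffordAlgebra.polar_smul_eq_zero_of_ι_smul_eq_zero {R M S : Type*} [CommRing R]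
    [AddCommGroup M] [Module R M] {Q : QuadraticForm R M} [AddCommGroup S] [Module R S]
    [Module (CliffordAlgebra Q) S] [IsScalarTower R (CliffordAlgebra Q) S] {ψ : S} {u v : M}
    (hu : ι Q u • ψ = 0) (hv : ι Q v • ψ = 0) : QuadraticMap.polar Q u v • ψ = 0 := by
  rw [← algebraMap_smul (CliffordAlgebra Q), ← ι_mul_ι_add_swap, add_smul, mul_smul, mul_smul,
    hu, hv, smul_zero, smul_zero, add_zero]

theorem LinearMap.BilinForm.eq_zero_of_ι_smul_eq_zero {K M S : Type*} [Field K] [NeZero (2 : K)]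
    [AddCommGroup M] [Module K M] {B : LinearMap.BilinForm K M} (hB : ∀ x y, B x y = B y x)
    [AddCommGroup S] [Module K S] [Module (CliffordAlgebra B.toQuadraticMap) S]
    [IsScalarTower K (CliffordAlgebra B.toQuadraticMap) S] {ψ : S} (hψ : ψ ≠ 0) {u v : M}
    (hu : ι B.toQuadraticMap u • ψ = 0) (hv : ι B.toQuadraticMap v • ψ = 0) : B u v = 0 := by
  have hpolar := (smul_eq_zero.mp (polar_smul_eq_zero_of_ι_smul_eq_zero hu hv)).resolve_right hψ
  rw [LinearMap.BilinMap.polar_toQuadraticMap, hB v u, ← two_mul] at hpolar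
  exact (mul_eq_zero.mp hpolar).resolve_left two_ne_zero

theorem LinearMap.BilinForm.mul_self_eq_zero_of_isotropic_range {R M : Type*} [CommRing R]
    [AddCommGroup M] [Module R M] {B : LinearMap.BilinForm R M} (hB : B.SeparatingLeft)
    {g : Module.End R M} (hg : ∀ x y, B (g x) y = B x (g y)) (hiso : ∀ x y, B (g x) (g y) = 0) :
    g * g = 0 := by
  ext x
  exact hB _ fun y => by rw [Module.End.mul_apply, hg, hiso]

theorem Submodule.le_comap_of_forall_sub_mem {R M : Type*} [Ring R] [AddCommGroup M] [Module R M]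
    {W : Submodule R M} {f : M →ₗ[R] M} (h : ∀ x, f x - x ∈ W) : W ≤ W.comap f := fun x hx => by
  simpa using W.add_mem (h x) hx

theorem Submodule.mapQ_eq_id_of_forall_sub_mem {R M : Type*} [Ring R] [AddCommGroup M]
    [Module R M] {W : Submodule R M} {f : M →ₗ[R] M} (h : ∀ x, f x - x ∈ W) :
    W.mapQ W f (le_comap_of_forall_sub_mem h) = LinearMap.id := by
  ext x
  exact (Submodule.Quotient.eq W).mpr (h x)

theorem stmt_2 (V : Type*) [AddCommGroup V] [Module ℝ V] [FiniteDimensional ℝ V]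
    (B : LinearMap.BilinForm ℝ V) (hBsymm : ∀ x y : V, B x y = B y x)
    (hBnondeg : B.Nondegenerate)
    (Q : QuadraticForm ℝ V) (hQ : ∀ x : V, Q x = B x x)
    (S : Type*) [AddCommGroup S] [Module ℝ S]
    [Module (CliffordAlgebra Q) S] [IsScalarTower ℝ (CliffordAlgebra Q) S]
    (ψ : S) (hψ : ψ ≠ 0)
    (f : V →ₗ[ℝ] V) (hfsymm : ∀ x y : V, B (f x) y = B x (f y))
    (hfψ : ∀ X : V, ι Q (f X) • ψ = ι Q X • ψ) :
    LinearMap.trace ℝ V f = (Module.finrank ℝ V : ℝ) ∧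
    ∀ W : Submodule ℝ V, (∀ X : V, X ∈ W ↔ ι Q X • ψ = 0) →
      ∃ h : W ≤ W.comap f, Submodule.mapQ W W f h = LinearMap.id := by
  obtain rfl : Q = B.toQuadraticMap := QuadraticMap.ext hQ
  set g : Module.End ℝ V := f - LinearMap.id
  have hg : ∀ X, ι B.toQuadraticMap (g X) • ψ = 0 := fun X => by
    rw [LinearMap.sub_apply, map_sub, sub_smul, hfψ, LinearMap.id_apply, sub_self]
  have hgsymm : ∀ x y, B (g x) y = B x (g y) := fun x y => by simp [g, hfsymm]
  have hgg : g * g = 0 := B.mul_self_eq_zero_of_isotropic_range hBnondeg.1 hgsymm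
    fun x y => B.eq_zero_of_ι_smul_eq_zero hBsymm hψ (hg x) (hg y)
  refine ⟨?_, fun W hW => ⟨_, Submodule.mapQ_eq_id_of_forall_sub_mem fun X => (hW _).2 (hg X)⟩⟩
  have htrace : LinearMap.trace ℝ V g = 0 :=
    (LinearMap.isNilpotent_trace_of_isNilpotent ⟨2, by rw [sq, hgg]⟩).eq_zero
  rw [show f = LinearMap.id + g by simp [g], map_add, htrace, LinearMap.trace_id, add_zero]
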